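/- arXiv:1902.05603 — 3 statements merged into one kernel-verified Lean document; each statement's English description precedes it below -/
import Mathlib

section
/- For n ≥ 3, every eigenvalue of the image of the elementary matrix E_{1,2} under any finite-dimensional complex representation of SL_n(ℤ) is a root of unity. -/
/-!
Put `x = E_{1,2}`, `z = E_{1,3}` and `t = E_{3,2}` in `SL_{n+3}(ℤ)`. Then `x` and `z` commute
and `t⁻¹ z t = z x`, so `z x^k` is conjugate to `z` for every `k`. Under a representation `ρ`,
a common eigenvector of the commuting matrices `ρ z`, `ρ x` with eigenvalues `α ≠ 0` and `μ`
shows that `α μ^k` is an eigenvalue of `ρ (z x^k)`, hence of `ρ z`, for every `k`. As `ρ z` has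
only finitely many eigenvalues, two of the powers `μ^k` coincide, and `μ` is a root of unity.
-/

open Matrix

/-- The elementary matrix `E = E_{1,2}` (identity plus a `1` in position `(1,2)`)
as an element of `SL_{n+3}(R)`. -/
def Emat (n : ℕ) (R : Type*) [CommRing R] :
    Matrix.SpecialLinearGroup (Fin (n + 3)) R :=
  ⟨Matrix.transvection 0 1 1, by exact Matrix.det_transvection_of_ne 0 1 zero_ne_one 1⟩

lemma isOfFinOrder_of_forall_mul_pow_mem {M₀ : Type*} [MonoidWithZero M₀] [IsCancelMulZero M₀]
    {α μ : M₀} (hα : α ≠ 0) (hμ : μ ≠ 0) {s : Set M₀} (hs : s.Finite)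
    (h : ∀ k : ℕ, α * μ ^ k ∈ s) : IsOfFinOrder μ := by
  obtain ⟨i, j, hij, hpow⟩ := hs.exists_lt_map_eq_of_forall_mem h
  refine isOfFinOrder_iff_pow_eq_one.2 ⟨j - i, Nat.sub_pos_of_lt hij, ?_⟩
  apply mul_left_cancel₀ (pow_ne_zero i hμ)
  rw [← pow_add, Nat.add_sub_cancel' hij.le, mul_one, mul_left_cancel₀ hα hpow]

namespace Module.End

variable {K V : Type*} [Field K] [IsAlgClosed K] [AddCommGroup V] [Module K V]
  [FiniteDimensional K V]

theorem exists_hasEigenvector_of_commute {f g : End K V} (hfg : Commute f g) {μ : K}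
    (hμ : g.HasEigenvalue μ) : ∃ α v, f.HasEigenvector α v ∧ g.HasEigenvector μ v := by
  have hmaps : ∀ v ∈ g.eigenspace μ, f v ∈ g.eigenspace μ := fun v hv ↦
    mapsTo_genEigenspace_of_comm hfg.symm μ 1 hv
  have : Nontrivial (g.eigenspace μ) := Submodule.nontrivial_iff_ne_bot.2 hμ
  obtain ⟨α, hα⟩ := exists_eigenvalue (f.restrict hmaps)
  obtain ⟨w, hw⟩ := hα.exists_hasEigenvector
  refine ⟨α, w, ⟨eigenspace_restrict_le_eigenspace f hmaps α ⟨w, hw.1, rfl⟩, ?_⟩,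
    ⟨w.2, ?_⟩⟩ <;> simpa using hw.2

theorem isOfFinOrder_of_spectrum_mul_pow_subset {a b : End K V} (ha : IsUnit a) (hb : IsUnit b)
    (hab : Commute a b) (h : ∀ k : ℕ, spectrum K (a * b ^ k) ⊆ spectrum K a) {μ : K}
    (hμ : μ ∈ spectrum K b) : IsOfFinOrder μ := by
  obtain ⟨α, v, hav, hbv⟩ :=
    exists_hasEigenvector_of_commute hab (hasEigenvalue_iff_mem_spectrum.2 hμ)
  have hα : α ≠ 0 := by
    rintro rfl
    exact (spectrum.zero_notMem_iff K).2 ha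
      (hasEigenvalue_iff_mem_spectrum.1 (hasEigenvalue_of_hasEigenvector hav))
  have hμ0 : μ ≠ 0 := by
    rintro rfl
    exact (spectrum.zero_notMem_iff K).2 hb hμ
  refine isOfFinOrder_of_forall_mul_pow_mem hα hμ0 (finite_spectrum a) fun k ↦ h k ?_
  refine hasEigenvalue_iff_mem_spectrum.1 (hasEigenvalue_of_hasEigenvector ⟨?_, hbv.2⟩)
  rw [mem_eigenspace_iff, mul_apply, hbv.pow_apply, map_smul, hav.apply_eq_smul, smul_smul,
    mul_comm]

end Module.End

theorem Matrix.isOfFinOrder_of_mem_spectrum_of_isConj_mul_pow {G ι K : Type*} [Group G]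
    [Fintype ι] [DecidableEq ι] [Field K] [IsAlgClosed K] (ρ : G →* GL ι K) {x z : G}
    (hzx : Commute z x) (hconj : ∀ k : ℕ, IsConj z (z * x ^ k)) {μ : K}
    (hμ : μ ∈ spectrum K (ρ x : Matrix ι ι K)) : IsOfFinOrder μ := by
  let φ : Matrix ι ι K ≃ₐ[K] Module.End K (ι → K) := toLinAlgEquiv'
  refine Module.End.isOfFinOrder_of_spectrum_mul_pow_subset ((ρ z).isUnit.map φ)
    ((ρ x).isUnit.map φ) ((hzx.map ρ).units_val.map φ) (fun k ↦ ?_)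
    (by rwa [AlgEquiv.spectrum_eq])
  obtain ⟨c, hc⟩ := isConj_iff.1 (hconj k)
  rw [← map_pow, ← map_mul, AlgEquiv.spectrum_eq, AlgEquiv.spectrum_eq,
    ← Units.val_pow_eq_pow_val, ← Units.val_mul, ← map_pow, ← map_mul, ← hc, map_mul,
    map_mul, map_inv, Units.val_mul, Units.val_mul, spectrum.units_conjugate]

namespace Matrix.SpecialLinearGroup

variable {ι F : Type*} [DecidableEq ι] [Fintype ι] [CommRing F]

lemma transvection_pow {i j : ι} (hij : i ≠ j) (b : F) (k : ℕ) :
    transvection hij b ^ k = transvection hij (k * b) := by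
  induction k with
  | zero => simp
  | succ k ih => rw [pow_succ, ih, ← transvection_add]; push_cast; ring_nf

lemma commute_transvection_transvection_of_eq_left {i j k : ι} (hij : i ≠ j) (hik : i ≠ k)
    (b c : F) : Commute (transvection hij b) (transvection hik c) := Subtype.ext <| by
  simp [transvection_coe, mul_add, add_mul, single_mul_single_of_ne _ _ _ _ hij.symm,
    single_mul_single_of_ne _ _ _ _ hik.symm, add_comm, add_left_comm]

lemma inv_transvection_mul_transvection_mul_transvection {i j k : ι} (hij : i ≠ j)
    (hik : i ≠ k) (hkj : k ≠ j) (b c : F) :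
    (transvection hkj c)⁻¹ * transvection hik b * transvection hkj c =
      transvection hik b * transvection hij (c * b) := Subtype.ext <| by
  simp only [transvection_inv, coe_mul, transvection_coe, ← single_neg, mul_add, mul_one,
    add_mul, one_mul, neg_mul, neg_zero, add_zero, single_mul_single_same, mul_comm b c,
    single_mul_single_of_ne _ _ _ _ hij.symm, single_mul_single_of_ne _ _ _ _ hik.symm,
    single_mul_single_of_ne _ _ _ _ hkj.symm]
  abel

end Matrix.SpecialLinearGroup

open Matrix.SpecialLinearGroup in
/-- For `n ≥ 3`, every eigenvalue of the image of the elementary matrix `E_{1,2}`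
under any finite-dimensional complex representation of `SL_n(ℤ)` is a root of unity. -/
theorem eigenvalue_of_elementary_isRootOfUnity (n N : ℕ)
    (ρ : Matrix.SpecialLinearGroup (Fin (n + 3)) ℤ →* GL (Fin N) ℂ)
    (μ : ℂ) (hμ : μ ∈ spectrum ℂ ((ρ (Emat n ℤ) : Matrix (Fin N) (Fin N) ℂ))) :
    ∃ m : ℕ, 0 < m ∧ μ ^ m = 1 := by
  have h2 : 2 % (n + 3) = 2 := Nat.mod_eq_of_lt (by omega)
  have h02 : (0 : Fin (n + 3)) ≠ 2 := by simp [Fin.ext_iff, h2]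
  have h21 : (2 : Fin (n + 3)) ≠ 1 := by simp [Fin.ext_iff, h2]
  have hx : Emat n ℤ = transvection zero_ne_one 1 := rfl
  have hconj (k : ℕ) : IsConj (transvection h02 1) (transvection h02 1 * Emat n ℤ ^ k) :=
    isConj_iff.2 ⟨(transvection h21 k)⁻¹, by
      rw [inv_inv, inv_transvection_mul_transvection_mul_transvection zero_ne_one h02 h21, hx,
        transvection_pow]⟩
  exact isOfFinOrder_iff_pow_eq_one.1 <| isOfFinOrder_of_mem_spectrum_of_isConj_mul_pow ρ
    (hx ▸ commute_transvection_transvection_of_eq_left h02 zero_ne_one 1 1) hconj hμ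
end

section
/- In a finite-dimensional algebraic representation of SL_n(ℂ), any vector that is not invariant under U_n(ℂ) has an infinite orbit under the integer points U_n(ℤ). -/
open Matrix

/-- A representation of `SL_n(ℂ)` is algebraic (rational) if each matrix entry of `ρ(g)`
is a polynomial function of the matrix entries of `g`. -/
def IsAlgebraicSL {n N : ℕ}
    (ρ : Matrix.SpecialLinearGroup (Fin n) ℂ →* GL (Fin N) ℂ) : Prop :=
  ∀ i j : Fin N, ∃ P : MvPolynomial (Fin n × Fin n) ℂ,
    ∀ g : Matrix.SpecialLinearGroup (Fin n) ℂ,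
      (ρ g : Matrix (Fin N) (Fin N) ℂ) i j =
        MvPolynomial.eval (fun q => (g : Matrix (Fin n) (Fin n) ℂ) q.1 q.2) P

/-- The subgroup (as a set) `U_n(ℂ) ⊆ SL_n(ℂ)` of upper unitriangular matrices. -/
def UnitriC (n : ℕ) : Set (Matrix.SpecialLinearGroup (Fin n) ℂ) :=
  {g | (∀ i, g.val i i = 1) ∧ ∀ i j : Fin n, j < i → g.val i j = 0}

/-- The set `U_n(ℤ) ⊆ SL_n(ℂ)` of integer upper unitriangular matrices. -/
def UnitriZ (n : ℕ) : Set (Matrix.SpecialLinearGroup (Fin n) ℂ) :=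
  {g | (∀ i, g.val i i = 1) ∧ (∀ i j : Fin n, j < i → g.val i j = 0) ∧
    ∀ i j : Fin n, i < j → ∃ m : ℤ, g.val i j = (m : ℂ)}

open MvPolynomial in
private lemma int_vanish_fin : ∀ {k : ℕ} (p : MvPolynomial (Fin k) ℂ),
    (∀ x : Fin k → ℤ, MvPolynomial.eval (fun i => (x i : ℂ)) p = 0) → p = 0 := by
  intro k
  induction k with
  | zero =>
    intro p h
    refine MvPolynomial.funext fun x => ?_
    rw [map_zero]
    have h0 := h (fun i => i.elim0)
    rw [show x = (fun i : Fin 0 => (((i.elim0 : ℤ) : ℤ) : ℂ)) from funext fun i => i.elim0]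
    exact h0
  | succ k ih =>
    intro p h
    apply (finSuccEquiv ℂ k).injective
    rw [map_zero]
    refine Polynomial.ext fun d => ?_
    rw [Polynomial.coeff_zero]
    apply ih
    intro x
    have key : Polynomial.map (eval (fun i => (x i : ℂ))) (finSuccEquiv ℂ k p) = 0 := by
      refine Polynomial.eq_zero_of_infinite_isRoot _ ?_
      refine Set.infinite_of_injective_forall_mem (f := fun m : ℤ => (m : ℂ))
        Int.cast_injective fun m => ?_
      show Polynomial.IsRoot _ _
      rw [Polynomial.IsRoot, ← eval_eq_eval_mv_eval']
      set y : Fin (k + 1) → ℤ := Fin.cons m x with hy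
      have hc : (fun i => ((y i : ℤ) : ℂ))
          = Fin.cons ((m : ℂ)) (fun i => (x i : ℂ)) := by
        funext i
        refine Fin.cases ?_ ?_ i <;> simp [hy]
      have := h y
      rwa [hc] at this
    have := congrArg (fun q => Polynomial.coeff q d) key
    simpa [Polynomial.coeff_map] using this

open MvPolynomial in
private lemma int_vanish {σ : Type*} (p : MvPolynomial σ ℂ)
    (h : ∀ x : σ → ℤ, MvPolynomial.eval (fun i => (x i : ℂ)) p = 0) : p = 0 := by
  classical
  obtain ⟨m, f, hf, q, rfl⟩ := exists_fin_rename p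
  suffices hq : q = 0 by rw [hq, map_zero]
  apply int_vanish_fin
  intro x
  have h0 := h (Function.extend f x 0)
  rw [eval_rename] at h0
  have hcomp : ((fun i => ((Function.extend f x 0 i : ℤ) : ℂ)) ∘ f)
      = fun i => (x i : ℂ) := by
    funext i
    simp [Function.comp, hf.extend_apply]
  rwa [hcomp] at h0

private noncomputable def triMat {n : ℕ} (t : Fin n × Fin n → ℂ) :
    Matrix (Fin n) (Fin n) ℂ :=
  fun i j => if i = j then 1 else if i < j then t (i, j) else 0

private lemma triMat_det {n : ℕ} (t : Fin n × Fin n → ℂ) : (triMat t).det = 1 := by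
  rw [Matrix.det_of_upperTriangular]
  · simp [triMat]
  · intro i j hij
    have h1 : ¬ (i = j) := fun h => absurd h.symm (ne_of_lt hij)
    have h2 : ¬ (i < j) := not_lt_of_gt hij
    simp [triMat, h1, h2]

private noncomputable def triSL {n : ℕ} (t : Fin n × Fin n → ℂ) :
    Matrix.SpecialLinearGroup (Fin n) ℂ :=
  ⟨triMat t, triMat_det t⟩

private lemma triSL_mem_unitriC {n : ℕ} (t : Fin n × Fin n → ℂ) :
    triSL t ∈ UnitriC n := by
  constructor
  · intro i; simp [triSL, triMat]
  · intro i j hij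
    have h1 : ¬ (i = j) := fun h => absurd h.symm (ne_of_lt hij)
    have h2 : ¬ (i < j) := not_lt_of_gt hij
    simp [triSL, triMat, h1, h2]

private lemma triSL_mem_unitriZ {n : ℕ} (x : Fin n × Fin n → ℤ) :
    triSL (fun q => (x q : ℂ)) ∈ UnitriZ n := by
  refine ⟨(triSL_mem_unitriC _).1, (triSL_mem_unitriC _).2, ?_⟩
  intro i j hij
  exact ⟨x (i, j), by simp [triSL, triMat, ne_of_lt hij, hij]⟩

private lemma triSL_zero {n : ℕ} : triSL (fun _ : Fin n × Fin n => (0 : ℂ)) = 1 := by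
  apply Subtype.ext
  funext i j
  by_cases h : i = j <;>
    simp [triSL, triMat, Matrix.SpecialLinearGroup.coe_one, Matrix.one_apply, h]

private lemma eq_triSL_of_mem_unitriC {n : ℕ} {g : Matrix.SpecialLinearGroup (Fin n) ℂ}
    (hg : g ∈ UnitriC n) : g = triSL (fun q => g.val q.1 q.2) := by
  apply Subtype.ext
  funext i j
  rcases lt_trichotomy i j with h | h | h
  · simp [triSL, triMat, ne_of_lt h, h]
  · subst h; simp [triSL, triMat, hg.1 i]
  · have h1 : ¬ (i = j) := fun hh => absurd hh.symm (ne_of_lt h)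
    have h2 : ¬ (i < j) := not_lt_of_gt h
    simp [triSL, triMat, h1, h2, hg.2 i j h]

open MvPolynomial in
private lemma eval_bind₁' {σ τ : Type*} (f : τ → ℂ) (g : σ → MvPolynomial τ ℂ)
    (φ : MvPolynomial σ ℂ) :
    MvPolynomial.eval f (bind₁ g φ) = MvPolynomial.eval (fun i => MvPolynomial.eval f (g i)) φ :=
  eval₂Hom_bind₁ (RingHom.id ℂ) f g φ

/-- In a finite-dimensional algebraic representation of `SL_n(ℂ)`, any vector that is not
invariant under `U_n(ℂ)` has an infinite orbit under the integer points `U_n(ℤ)`. -/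
theorem infinite_unitriZ_orbit_of_not_unitriC_invariant
    (n N : ℕ) (hn : 3 ≤ n)
    (ρ : Matrix.SpecialLinearGroup (Fin n) ℂ →* GL (Fin N) ℂ)
    (halg : IsAlgebraicSL ρ)
    (v : Fin N → ℂ)
    (hv : ∃ g ∈ UnitriC n, (ρ g : Matrix (Fin N) (Fin N) ℂ).mulVec v ≠ v) :
    Set.Infinite ((fun g : Matrix.SpecialLinearGroup (Fin n) ℂ =>
      (ρ g : Matrix (Fin N) (Fin N) ℂ).mulVec v) '' UnitriZ n) := by
  classical
  by_contra hinf
  rw [Set.not_infinite] at hinf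
  obtain ⟨g₀, hg₀, hne⟩ := hv
  apply hne
  choose P hP using halg
  set sub : Fin n × Fin n → MvPolynomial (Fin n × Fin n) ℂ :=
    fun q => if q.1 = q.2 then 1 else if q.1 < q.2 then MvPolynomial.X q else 0 with hsub
  set F : Fin N → MvPolynomial (Fin n × Fin n) ℂ :=
    fun i => (∑ j, MvPolynomial.C (v j) * MvPolynomial.bind₁ sub (P i j))
      - MvPolynomial.C (v i) with hF
  have hevalsub : ∀ (t : Fin n × Fin n → ℂ) (q : Fin n × Fin n),
      MvPolynomial.eval t (sub q) = (triSL t).val q.1 q.2 := by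
    intro t q
    by_cases h1 : q.1 = q.2
    · simp [hsub, triSL, triMat, h1]
    · by_cases h2 : q.1 < q.2 <;> simp [hsub, triSL, triMat, h1, h2]
  have hevalF : ∀ (t : Fin n × Fin n → ℂ) (i : Fin N),
      MvPolynomial.eval t (F i)
        = (ρ (triSL t) : Matrix (Fin N) (Fin N) ℂ).mulVec v i - v i := by
    intro t i
    simp only [hF, map_sub, map_sum, MvPolynomial.eval_C]
    congr 1
    rw [Matrix.mulVec, dotProduct]
    refine Finset.sum_congr rfl fun j _ => ?_
    rw [_root_.map_mul, MvPolynomial.eval_C, eval_bind₁',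
      funext fun q => hevalsub t q, ← hP i j (triSL t), mul_comm]
  have hzero : ∀ i, F i = 0 := by
    intro i
    set Orb := ((fun g : Matrix.SpecialLinearGroup (Fin n) ℂ =>
      (ρ g : Matrix (Fin N) (Fin N) ℂ).mulVec v) '' UnitriZ n) with hOrb
    have hTfin : ((fun w : Fin N → ℂ => w i - v i) '' Orb).Finite := hinf.image _
    have hmem : ∀ x : Fin n × Fin n → ℤ,
        MvPolynomial.eval (fun q => (x q : ℂ)) (F i) ∈ hTfin.toFinset := by
      intro x
      rw [Set.Finite.mem_toFinset, hevalF (fun q => (x q : ℂ)) i]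
      exact ⟨(ρ (triSL fun q => (x q : ℂ)) : Matrix (Fin N) (Fin N) ℂ).mulVec v,
        ⟨triSL (fun q => (x q : ℂ)), triSL_mem_unitriZ x, rfl⟩, rfl⟩
    have hG : (∏ c ∈ hTfin.toFinset, (F i - MvPolynomial.C c)) = 0 := by
      apply int_vanish
      intro x
      rw [map_prod]
      exact Finset.prod_eq_zero (hmem x)
        (by rw [map_sub, MvPolynomial.eval_C, sub_self])
    obtain ⟨c, _, hfc⟩ := Finset.prod_eq_zero_iff.mp hG
    have hFc : F i = MvPolynomial.C c := sub_eq_zero.mp hfc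
    have h0 : MvPolynomial.eval (fun _ => (0 : ℂ)) (F i) = 0 := by
      rw [hevalF (fun _ => (0 : ℂ)) i, triSL_zero, map_one ρ]
      simp [Matrix.one_mulVec, Units.val_one]
    rw [hFc, MvPolynomial.eval_C] at h0
    rw [hFc, h0, map_zero]
  have hg₀eq : g₀ = triSL (fun q => g₀.val q.1 q.2) := eq_triSL_of_mem_unitriC hg₀
  funext i
  have := hevalF (fun q => g₀.val q.1 q.2) i
  rw [hzero i, map_zero, ← hg₀eq] at this
  exact sub_eq_zero.mp this.symm
end

section
/- Let n ≥ 3 and ℓ ≥ 1. The congruence subgroup Γ_{n+1}(ℓ) ⊆ SL_{n+1}(ℤ) is contained in the subgroup generated by Γ_n(ℓ) (embedded in the top-left n×n block) together with the copy of SL_2(ℤ) embedded in the bottom-right 2×2 block. -/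
/-!
Let `H` be the subgroup generated by `Γ_n(ℓ)` (fixing the last coordinate `q`) and the `SL₂` on
the coordinates `p, q`. A transvection `1 + e_q zᵀ` with `z_q = 0` and `ℓ ∣ z_j` for `j ≠ p` lies
in `H`: its `p`-part is in `SL₂`, and the rest is the commutator of `1 + e_q e_pᵀ ∈ SL₂` with
`1 + e_p zᵀ ∈ Γ_n(ℓ)`; the same holds for the column transvections `1 + w e_qᵀ`.

Let `g ∈ Γ_{n+1}(ℓ)` have last column `v`. An `SL₂` move turns `(v_p, v_q)` into `(d, 0)` with
`d = gcd(v_p, v_q)`. As `d ∣ v_q ≡ 1 (mod ℓ)`, `d` is prime to `ℓ`, so `1` is a combination of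
`d` and the `ℓ v_i`; a row transvection then makes the last entry `1` and a column transvection
clears the rest. This gives `x ∈ H` with `x g e_q = e_q`. Reduction mod `ℓ` maps `H` into `SL₂`,
so `x g` is congruent to an element of `SL₂`, and a row transvection `y ∈ H` clears its last row.
Now `x g y` fixes `e_q` on both sides and is congruent to an element of `SL₂`, which must be `1`:
so `x g y ∈ Γ_n(ℓ)`.
-/

open Matrix MatrixGroups
open scoped commutatorElement

theorem one_add_mul_one_add_mul_one_sub_mul_one_sub {A : Type*} [Ring A] {X Y : A}
    (hX : X * X = 0) (hY : Y * Y = 0) (hYX : Y * X = 0) :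
    (1 + X) * (1 + Y) * (1 - X) * (1 - Y) = 1 + X * Y := by
  have hXYX : X * Y * X = 0 := by rw [mul_assoc, hYX, mul_zero]
  have hXYY : X * Y * Y = 0 := by rw [mul_assoc, hY, mul_zero]
  simp only [mul_add, add_mul, mul_sub, sub_mul, mul_one, one_mul, hX, hY, hYX, hXYX, hXYY,
    zero_mul]
  abel

theorem Matrix.SpecialLinearGroup.inv_mulVec_mulVec {n R : Type*} [Fintype n] [DecidableEq n]
    [CommRing R] (g : SpecialLinearGroup n R) (v : n → R) :
    (↑g⁻¹ : Matrix n n R) *ᵥ ((g : Matrix n n R) *ᵥ v) = v := by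
  rw [mulVec_mulVec]
  simp [adjugate_mul]

theorem Int.exists_SL2_mulVec_eq_gcd (a b : ℤ) :
    ∃ S : SL(2, ℤ), (S : Matrix (Fin 2) (Fin 2) ℤ) *ᵥ ![a, b] = ![(Int.gcd a b : ℤ), 0] := by
  rcases Nat.eq_zero_or_pos (Int.gcd a b) with h0 | hpos
  · obtain ⟨rfl, rfl⟩ := Int.gcd_eq_zero_iff.mp h0
    exact ⟨1, by simp⟩
  obtain ⟨a', b', hcop, ha, hb⟩ := Int.exists_gcd_one hpos
  obtain ⟨g, hg0, hg1⟩ := (Int.isCoprime_iff_gcd_eq_one.mpr hcop).exists_SL2_col 0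
  have hab : ![a, b] = (Int.gcd a b : ℤ) • ((g : Matrix (Fin 2) (Fin 2) ℤ) *ᵥ Pi.single 0 1) := by
    ext i
    fin_cases i
    · simp [hg0]; linear_combination ha
    · simp [hg1]; linear_combination hb
  refine ⟨g⁻¹, ?_⟩
  rw [hab, mulVec_smul, SpecialLinearGroup.inv_mulVec_mulVec]
  ext i
  fin_cases i <;> simp

theorem Matrix.exists_dotProduct_eq_one_of_isCoprime {n R : Type*} [Fintype n] [DecidableEq n]
    [CommRing R] {y : n → R} (hy : ∃ c, c ⬝ᵥ y = 1) {p q : n} (hyq : y q = 0) {ℓ : R}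
    (hcop : IsCoprime (y p) ℓ) :
    ∃ z : n → R, z q = 0 ∧ (∀ i, i ≠ p → ℓ ∣ z i) ∧ z ⬝ᵥ y = 1 := by
  obtain ⟨c, hc⟩ := hy
  obtain ⟨s, t, hst⟩ := hcop
  set w : n → R := (t * ℓ) • c + Pi.single p s
  refine ⟨w - Pi.single q (w q), by simp, fun i hip => ?_, ?_⟩
  · by_cases hiq : i = q
    · simp [hiq]
    · simp [w, hip, hiq, mul_assoc, mul_left_comm t ℓ]
  · rw [sub_dotProduct, single_dotProduct, hyq, mul_zero, sub_zero, add_dotProduct,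
      smul_dotProduct, hc, single_dotProduct, smul_eq_mul, mul_one, ← hst]
    ring

theorem Matrix.mul_apply_of_row_eq_one {n α : Type*} [Fintype n] [DecidableEq n]
    [NonAssocSemiring α] (M N : Matrix n n α) {i : n}
    (h : ∀ k, M i k = (1 : Matrix n n α) i k) (j : n) : (M * N) i j = N i j := by
  rw [mul_apply, Finset.sum_congr rfl fun k _ => by rw [h k], ← mul_apply, Matrix.one_mul]

theorem Matrix.mul_apply_of_col_eq_one {n α : Type*} [Fintype n] [DecidableEq n]
    [NonAssocSemiring α] (M N : Matrix n n α) {j : n}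
    (h : ∀ k, N k j = (1 : Matrix n n α) k j) (i : n) : (M * N) i j = M i j := by
  rw [mul_apply, Finset.sum_congr rfl fun k _ => by rw [h k], ← mul_apply, Matrix.mul_one]

theorem Matrix.dvd_sub_single_apply {n R : Type*} [DecidableEq n] [CommRing R] {p q : n}
    {ℓ : R} {w : n → R} (hwq : w q = 0) (hw : ∀ i, i ≠ p → i ≠ q → ℓ ∣ w i) (i : n) :
    ℓ ∣ (w - Pi.single p (w p) : n → R) i := by
  by_cases hip : i = p
  · simp [hip]
  by_cases hiq : i = q
  · subst hiq
    simp [hwq, hip]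
  simpa [hip] using hw i hip hiq

namespace Matrix.SpecialLinearGroup

variable {n R : Type*} [Fintype n] [DecidableEq n] [CommRing R]

section FixingRowsCols

variable (R) in
/-- The copy of `SL(sᶜ)` in `SL(n)`: for `s = {q}` the top-left `SL_n`, for `s = {p, q}ᶜ` the
bottom-right `SL₂`. -/
def fixingRowsCols (s : Set n) : Subgroup (SpecialLinearGroup n R) where
  carrier := {g | ∀ i j, i ∈ s ∨ j ∈ s → g i j = (1 : Matrix n n R) i j}
  one_mem' _ _ _ := rfl
  mul_mem' {g h} hg hh i j hij := by
    rcases hij with hi | hj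
    · rw [coe_mul, mul_apply_of_row_eq_one _ _ (fun k => hg i k (.inl hi)), hh i j (.inl hi)]
    · rw [coe_mul, mul_apply_of_col_eq_one _ _ (fun k => hh k j (.inr hj)), hg i j (.inr hj)]
  inv_mem' {g} hg i j hij := by
    rcases hij with hi | hj
    · calc ((g⁻¹ : SpecialLinearGroup n R) : Matrix n n R) i j
          = ((g * g⁻¹ : SpecialLinearGroup n R) : Matrix n n R) i j :=
            (mul_apply_of_row_eq_one _ _ (fun k => hg i k (.inl hi)) j).symm
        _ = (1 : Matrix n n R) i j := by rw [mul_inv_cancel, coe_one]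
    · calc ((g⁻¹ : SpecialLinearGroup n R) : Matrix n n R) i j
          = ((g⁻¹ * g : SpecialLinearGroup n R) : Matrix n n R) i j :=
            (mul_apply_of_col_eq_one _ _ (fun k => hg k j (.inr hj)) i).symm
        _ = (1 : Matrix n n R) i j := by rw [inv_mul_cancel, coe_one]

theorem fixingRowsCols_inf (s t : Set n) :
    fixingRowsCols R s ⊓ fixingRowsCols R t = fixingRowsCols R (s ∪ t) := by
  ext g
  simp only [Subgroup.mem_inf, fixingRowsCols, Subgroup.mem_mk, Submonoid.mem_mk,
    Subsemigroup.mem_mk, Set.mem_ofPred_eq, Set.mem_union]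
  constructor
  · rintro ⟨hs, ht⟩ i j ((hi | hi) | (hj | hj))
    exacts [hs i j (.inl hi), ht i j (.inl hi), hs i j (.inr hj), ht i j (.inr hj)]
  · intro h
    exact ⟨fun i j hij => h i j (hij.imp .inl .inl), fun i j hij => h i j (hij.imp .inr .inr)⟩

theorem eq_one_of_mem_fixingRowsCols {s : Set n} {p : n} (hs : ∀ i, i ≠ p → i ∈ s)
    {g : SpecialLinearGroup n R} (hg : g ∈ fixingRowsCols R s) : g = 1 := by
  have hoff : ∀ i j, (i, j) ≠ (p, p) → g i j = (1 : Matrix n n R) i j := by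
    intro i j hij
    by_cases hi : i = p
    · exact hg i j (.inr (hs j fun hj => hij (by rw [hi, hj])))
    · exact hg i j (.inl (hs i hi))
  have hdiag : (g : Matrix n n R) = diagonal (Function.update 1 p (g p p)) := by
    ext i j
    by_cases hij : (i, j) = (p, p)
    · simp_all
    · rw [hoff i j hij, one_apply, diagonal_apply]
      split_ifs with h <;> simp_all
  have hpp : g p p = 1 := by
    have := g.det_coe
    rw [hdiag, det_diagonal, Finset.prod_update_of_mem (Finset.mem_univ p)] at this
    simpa using this
  ext i j
  by_cases hij : (i, j) = (p, p)
  · simp_all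
  · exact hoff i j hij

theorem map_mem_fixingRowsCols {S : Type*} [CommRing S] (f : R →+* S) {s : Set n}
    {g : SpecialLinearGroup n R} (hg : g ∈ fixingRowsCols R s) :
    map f g ∈ fixingRowsCols S s := by
  intro i j hij
  rw [map_apply_coe, RingHom.mapMatrix_apply, Matrix.map_apply, hg i j hij, one_apply, one_apply]
  split_ifs <;> simp

theorem mulVec_apply_of_mem_fixingRowsCols {s : Set n} {g : SpecialLinearGroup n R}
    (hg : g ∈ fixingRowsCols R s) {i : n} (hi : i ∈ s) (v : n → R) :
    ((g : Matrix n n R) *ᵥ v) i = v i := by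
  simp only [mulVec, dotProduct]
  rw [Finset.sum_congr rfl fun k _ => by rw [hg i k (.inl hi)]]
  simp [one_apply]

end FixingRowsCols

section Transvec

def transvec (u v : n → R) (h : v ⬝ᵥ u = 0) : SpecialLinearGroup n R :=
  ⟨1 + vecMulVec u v, by
    rw [vecMulVec_eq Unit, det_one_add_replicateCol_mul_replicateRow, h, add_zero]⟩

@[simp] theorem coe_transvec (u v : n → R) (h : v ⬝ᵥ u = 0) :
    (transvec u v h : Matrix n n R) = 1 + vecMulVec u v := rfl

theorem transvec_mulVec (u v : n → R) (h : v ⬝ᵥ u = 0) (y : n → R) :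
    (transvec u v h : Matrix n n R) *ᵥ y = y + (v ⬝ᵥ y) • u := by
  rw [coe_transvec, add_mulVec, one_mulVec, vecMulVec_mulVec, op_smul_eq_smul]

theorem transvec_mul_transvec_left (u : n → R) {a b : n → R} (ha : a ⬝ᵥ u = 0)
    (hb : b ⬝ᵥ u = 0) :
    transvec u a ha * transvec u b hb =
      transvec u (a + b) (by rw [add_dotProduct, ha, hb, add_zero]) := by
  apply Subtype.ext
  simp only [coe_mul, coe_transvec, mul_add, add_mul, one_mul, mul_one, vecMulVec_mul_vecMulVec,
    ha, zero_smul, vecMulVec_zero, vecMulVec_add]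
  abel

theorem transvec_mul_transvec_right {a b : n → R} (v : n → R) (ha : v ⬝ᵥ a = 0)
    (hb : v ⬝ᵥ b = 0) :
    transvec a v ha * transvec b v hb =
      transvec (a + b) v (by rw [dotProduct_add, ha, hb, add_zero]) := by
  apply Subtype.ext
  simp only [coe_mul, coe_transvec, mul_add, add_mul, one_mul, mul_one, vecMulVec_mul_vecMulVec,
    hb, zero_smul, vecMulVec_zero, add_vecMulVec]
  abel

theorem transvec_inv (u v : n → R) (h : v ⬝ᵥ u = 0) :
    (transvec u v h)⁻¹ = transvec (-u) v (by rw [dotProduct_neg, h, neg_zero]) := by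
  refine inv_eq_of_mul_eq_one_right ?_
  rw [transvec_mul_transvec_right]
  apply Subtype.ext
  simp

theorem commutatorElement_transvec {u a b v : n → R} (ha : a ⬝ᵥ u = 0) (hv : v ⬝ᵥ b = 0)
    (hab : a ⬝ᵥ b = 1) (hvu : v ⬝ᵥ u = 0) :
    ⁅transvec u a ha, transvec b v hv⁆ = transvec u v hvu := by
  apply Subtype.ext
  rw [commutatorElement_def, transvec_inv, transvec_inv]
  simp only [coe_mul, coe_transvec, neg_vecMulVec, ← sub_eq_add_neg]
  rw [one_add_mul_one_add_mul_one_sub_mul_one_sub] <;>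
    simp [vecMulVec_mul_vecMulVec, ha, hv, hab, hvu]

theorem transvec_mem_fixingRowsCols {u v : n → R} (h : v ⬝ᵥ u = 0) {s : Set n}
    (hs : ∀ i ∈ s, u i = 0 ∧ v i = 0) : transvec u v h ∈ fixingRowsCols R s := by
  rintro i j (hi | hj) <;> simp [vecMulVec_apply, (hs _ ‹_›).1, (hs _ ‹_›).2]

theorem transvec_single_mem_fixingRowsCols {p q a b : n} (x y : R) (ha : a = p ∨ a = q)
    (hb : b = p ∨ b = q) (h : Pi.single b y ⬝ᵥ Pi.single a x = 0) :
    transvec (Pi.single a x) (Pi.single b y) h ∈ fixingRowsCols R {p, q}ᶜ := by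
  refine transvec_mem_fixingRowsCols h fun i hi => ?_
  simp only [Set.mem_compl_iff, Set.mem_insert_iff, Set.mem_singleton_iff, not_or] at hi
  constructor <;> apply Pi.single_eq_of_ne <;> grind

end Transvec

section Extend

variable {ι : Type*} [Fintype ι] [DecidableEq ι]

/-- `S` acting on the coordinates `e ι` and trivially on the others;
`(1 : Matrix n n R).submatrix id e` is the matrix of `e`. -/
def extend (e : ι ↪ n) (S : SpecialLinearGroup ι R) : SpecialLinearGroup n R :=
  ⟨1 + (1 : Matrix n n R).submatrix id e * ((S : Matrix ι ι R) - 1) *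
      (1 : Matrix n n R).submatrix e id, by
    rw [Matrix.mul_assoc, det_one_add_mul_comm, Matrix.mul_assoc,
      ← submatrix_mul _ _ _ _ _ Function.bijective_id, Matrix.mul_one, submatrix_one_embedding,
      Matrix.mul_one, add_sub_cancel, S.det_coe]⟩

theorem extend_mem_fixingRowsCols (e : ι ↪ n) (S : SpecialLinearGroup ι R) :
    extend e S ∈ fixingRowsCols R (Set.range e)ᶜ := by
  rintro i j (hi | hj)
  · simp only [Set.mem_compl_iff, Set.mem_range, not_exists] at hi
    simp [extend, mul_apply, one_apply, Ne.symm (hi _)]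
  · simp only [Set.mem_compl_iff, Set.mem_range, not_exists] at hj
    simp [extend, mul_apply, one_apply, hj]

theorem extend_mulVec_apply (e : ι ↪ n) (S : SpecialLinearGroup ι R) (v : n → R) (a : ι) :
    ((extend e S : Matrix n n R) *ᵥ v) (e a) = ((S : Matrix ι ι R) *ᵥ (v ∘ e)) a := by
  have hV : (1 : Matrix n n R).submatrix e id *ᵥ v = v ∘ e := by
    ext b
    simp [mulVec, dotProduct, one_apply]
  have hU (x : ι → R) : ((1 : Matrix n n R).submatrix id e *ᵥ x) (e a) = x a := by
    simp [mulVec, dotProduct, one_apply]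
  simp only [extend, coe_mk, add_mulVec, one_mulVec, ← mulVec_mulVec, hV, Pi.add_apply, hU,
    sub_mulVec, Pi.sub_apply, Function.comp_apply]
  abel

end Extend

theorem exists_mem_fixingRowsCols_mulVec_eq_gcd {p q : n} (hpq : p ≠ q) (v : n → ℤ) :
    ∃ M ∈ fixingRowsCols ℤ {p, q}ᶜ, ((M : Matrix n n ℤ) *ᵥ v) p = Int.gcd (v p) (v q) ∧
      ((M : Matrix n n ℤ) *ᵥ v) q = 0 := by
  obtain ⟨S, hS⟩ := Int.exists_SL2_mulVec_eq_gcd (v p) (v q)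
  let e : Fin 2 ↪ n := ⟨![p, q], fun a b => by fin_cases a <;> fin_cases b <;> simp [hpq, hpq.symm]⟩
  have hrange : Set.range e = {p, q} := by
    ext i
    simp only [Set.mem_range, Fin.exists_fin_two, Set.mem_insert_iff, Set.mem_singleton_iff]
    exact or_congr eq_comm eq_comm
  have hve : v ∘ e = ![v p, v q] := by ext a; fin_cases a <;> rfl
  refine ⟨extend e S, hrange ▸ extend_mem_fixingRowsCols e S, ?_, ?_⟩
  · have := extend_mulVec_apply e S v 0
    rwa [hve, hS] at this
  · have := extend_mulVec_apply e S v 1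
    rwa [hve, hS] at this

section Congruence

variable (n) in
def principalCongruenceSubgroup (ℓ : ℕ) : Subgroup (SpecialLinearGroup n ℤ) :=
  (map (Int.castRingHom (ZMod ℓ))).ker

theorem mem_principalCongruenceSubgroup_iff {ℓ : ℕ} {g : SpecialLinearGroup n ℤ} :
    g ∈ principalCongruenceSubgroup n ℓ ↔ ∀ i j, (ℓ : ℤ) ∣ g i j - (1 : Matrix n n ℤ) i j := by
  simp only [principalCongruenceSubgroup, MonoidHom.mem_ker, SpecialLinearGroup.ext_iff,
    map_apply_coe, RingHom.mapMatrix_apply, Matrix.map_apply, coe_one, Int.coe_castRingHom]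
  refine forall₂_congr fun i j => ?_
  have hone : (((1 : Matrix n n ℤ) i j : ℤ) : ZMod ℓ) = (1 : Matrix n n (ZMod ℓ)) i j := by
    by_cases hij : i = j <;> simp [one_apply, hij]
  rw [← hone, eq_comm, ZMod.intCast_eq_intCast_iff_dvd_sub]

theorem transvec_mem_principalCongruenceSubgroup {ℓ : ℕ} {u v : n → ℤ} (h : v ⬝ᵥ u = 0)
    (huv : ∀ i j, (ℓ : ℤ) ∣ u i * v j) : transvec u v h ∈ principalCongruenceSubgroup n ℓ := by
  rw [mem_principalCongruenceSubgroup_iff]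
  intro i j
  simpa [vecMulVec_apply] using huv i j

theorem mem_principalCongruenceSubgroup_of_mem_fixingRowsCols {p q : n} {ℓ : ℕ}
    {k : SpecialLinearGroup n ℤ} (hk : k ∈ fixingRowsCols ℤ {q})
    (hkℓ : map (Int.castRingHom (ZMod ℓ)) k ∈ fixingRowsCols (ZMod ℓ) {p, q}ᶜ) :
    k ∈ principalCongruenceSubgroup n ℓ := by
  refine MonoidHom.mem_ker.mpr (eq_one_of_mem_fixingRowsCols (p := p) (s := {q} ∪ {p, q}ᶜ)
    (fun i hip => by by_cases hiq : i = q <;> simp [hip, hiq]) ?_)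
  rw [← fixingRowsCols_inf]
  exact ⟨map_mem_fixingRowsCols _ hk, hkℓ⟩

end Congruence

section Generation

variable {p q : n} {ℓ : ℕ} {H : Subgroup (SpecialLinearGroup n ℤ)}

theorem transvec_single_left_mem (hpq : p ≠ q)
    (hA : principalCongruenceSubgroup n ℓ ⊓ fixingRowsCols ℤ {q} ≤ H)
    (hB : fixingRowsCols ℤ {p, q}ᶜ ≤ H) {z : n → ℤ} (hzq : z q = 0)
    (hz : ∀ j, j ≠ p → j ≠ q → (ℓ : ℤ) ∣ z j) :
    transvec (Pi.single q 1) z (by rwa [dotProduct_single_one]) ∈ H := by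
  set z' := z - Pi.single p (z p)
  have hz'p : z' p = 0 := by simp [z']
  have hz'q : z' q = 0 := by simp [z', hzq, hpq.symm]
  have hsplit : transvec (Pi.single q 1) z (by rwa [dotProduct_single_one]) =
      transvec (Pi.single q 1) z' (by rwa [dotProduct_single_one]) *
        transvec (Pi.single q 1) (Pi.single p (z p)) (by simp [hpq.symm]) := by
    rw [transvec_mul_transvec_left]
    congr 1
    simp [z']
  have hcomm := commutatorElement_transvec (u := Pi.single q 1) (a := Pi.single p 1)
    (b := Pi.single p 1) (v := z') (by simp [hpq.symm]) (by simp [hz'p]) (by simp)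
    (by simp [hz'q])
  have h₁ := hB (transvec_single_mem_fixingRowsCols 1 1 (.inr rfl) (.inl rfl) (by simp [hpq.symm]))
  have h₂ : transvec (Pi.single p 1) z' (by simp [hz'p]) ∈ H :=
    hA ⟨transvec_mem_principalCongruenceSubgroup _
      fun i j => dvd_mul_of_dvd_right (dvd_sub_single_apply hzq hz j) _,
    transvec_mem_fixingRowsCols _ fun i hi => by simp_all⟩
  have h₃ := hB (transvec_single_mem_fixingRowsCols 1 (z p) (.inr rfl) (.inl rfl)
    (by simp [hpq.symm]))
  rw [hsplit, ← hcomm, commutatorElement_def]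
  exact H.mul_mem (H.mul_mem (H.mul_mem (H.mul_mem h₁ h₂) (H.inv_mem h₁)) (H.inv_mem h₂)) h₃

theorem transvec_single_right_mem (hpq : p ≠ q)
    (hA : principalCongruenceSubgroup n ℓ ⊓ fixingRowsCols ℤ {q} ≤ H)
    (hB : fixingRowsCols ℤ {p, q}ᶜ ≤ H) {w : n → ℤ} (hwq : w q = 0)
    (hw : ∀ i, i ≠ p → i ≠ q → (ℓ : ℤ) ∣ w i) :
    transvec w (Pi.single q 1) (by rwa [single_one_dotProduct]) ∈ H := by
  set w' := w - Pi.single p (w p)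
  have hw'p : w' p = 0 := by simp [w']
  have hw'q : w' q = 0 := by simp [w', hwq, hpq.symm]
  have hsplit : transvec w (Pi.single q 1) (by rwa [single_one_dotProduct]) =
      transvec w' (Pi.single q 1) (by rwa [single_one_dotProduct]) *
        transvec (Pi.single p (w p)) (Pi.single q 1) (by simp [hpq.symm]) := by
    rw [transvec_mul_transvec_right]
    congr 1
    simp [w']
  have hcomm := commutatorElement_transvec (u := w') (a := Pi.single p 1)
    (b := Pi.single p 1) (v := Pi.single q 1) (by simp [hw'p]) (by simp [hpq.symm]) (by simp)
    (by simp [hw'q])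
  have h₁ : transvec w' (Pi.single p 1) (by simp [hw'p]) ∈ H :=
    hA ⟨transvec_mem_principalCongruenceSubgroup _
      fun i j => dvd_mul_of_dvd_left (dvd_sub_single_apply hwq hw i) _,
    transvec_mem_fixingRowsCols _ fun i hi => by simp_all⟩
  have h₂ := hB (transvec_single_mem_fixingRowsCols 1 1 (.inl rfl) (.inr rfl) (by simp [hpq]))
  have h₃ := hB (transvec_single_mem_fixingRowsCols (w p) 1 (.inl rfl) (.inr rfl)
    (by simp [hpq]))
  rw [hsplit, ← hcomm, commutatorElement_def]
  exact H.mul_mem (H.mul_mem (H.mul_mem (H.mul_mem h₁ h₂) (H.inv_mem h₁)) (H.inv_mem h₂)) h₃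

theorem exists_mem_mulVec_eq_single (hpq : p ≠ q)
    (hA : principalCongruenceSubgroup n ℓ ⊓ fixingRowsCols ℤ {q} ≤ H)
    (hB : fixingRowsCols ℤ {p, q}ᶜ ≤ H) {v : n → ℤ} (hv : ∃ c, c ⬝ᵥ v = 1)
    (hvtop : ∀ i, i ≠ p → i ≠ q → (ℓ : ℤ) ∣ v i) (hvq : (ℓ : ℤ) ∣ v q - 1) :
    ∃ x ∈ H, (x : Matrix n n ℤ) *ᵥ v = Pi.single q 1 := by
  obtain ⟨M, hM, hyp, hyq⟩ := exists_mem_fixingRowsCols_mulVec_eq_gcd hpq v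
  set y := (M : Matrix n n ℤ) *ᵥ v
  have hytop : ∀ i, i ≠ p → i ≠ q → y i = v i := fun i hip hiq =>
    mulVec_apply_of_mem_fixingRowsCols hM (by simp [hip, hiq]) v
  have hy : ∃ c, c ⬝ᵥ y = 1 := by
    obtain ⟨c, hc⟩ := hv
    exact ⟨c ᵥ* ↑M⁻¹, by rw [← dotProduct_mulVec, inv_mulVec_mulVec, hc]⟩
  have hcop : IsCoprime (y p) (ℓ : ℤ) := by
    obtain ⟨k, hk⟩ := hvq
    refine IsCoprime.of_isCoprime_of_dvd_left
      (show IsCoprime (v q) (ℓ : ℤ) from ⟨1, -k, by linear_combination hk⟩) ?_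
    rw [hyp]
    exact Int.gcd_dvd_right _ _
  obtain ⟨z, hzq, hzℓ, hzy⟩ := exists_dotProduct_eq_one_of_isCoprime hy hyq hcop
  refine ⟨transvec (-y) (Pi.single q 1) (by simp [hyq]) * transvec (Pi.single q 1) z
    (by simp [hzq]) * M, H.mul_mem (H.mul_mem ?_ ?_) (hB hM), ?_⟩
  · refine transvec_single_right_mem hpq hA hB (by simp [hyq]) fun i hip hiq => ?_
    simpa [hytop i hip hiq] using hvtop i hip hiq
  · exact transvec_single_left_mem hpq hA hB hzq fun j hjp _ => hzℓ j hjp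
  · calc _ = (transvec (-y) (Pi.single q 1) (by simp [hyq]) : Matrix n n ℤ) *ᵥ
          ((transvec (Pi.single q 1) z (by simp [hzq]) : Matrix n n ℤ) *ᵥ y) := by
          simp only [coe_mul, ← mulVec_mulVec]; rfl
      _ = (transvec (-y) (Pi.single q 1) (by simp [hyq]) : Matrix n n ℤ) *ᵥ
          (y + Pi.single q 1) := by rw [transvec_mulVec (Pi.single q 1) z, hzy, one_smul]
      _ = Pi.single q 1 := by
          rw [transvec_mulVec, single_one_dotProduct, Pi.add_apply, hyq, Pi.single_eq_same,
            zero_add, one_smul]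
          abel

theorem exists_mul_mem_fixingRowsCols (hpq : p ≠ q)
    (hA : principalCongruenceSubgroup n ℓ ⊓ fixingRowsCols ℤ {q} ≤ H)
    (hB : fixingRowsCols ℤ {p, q}ᶜ ≤ H) {k : SpecialLinearGroup n ℤ}
    (hk : ∀ i, k i q = (1 : Matrix n n ℤ) i q) (hkℓ : ∀ j, j ≠ p → j ≠ q → (ℓ : ℤ) ∣ k q j) :
    ∃ y ∈ H, k * y ∈ fixingRowsCols ℤ {q} := by
  set z : n → ℤ := Pi.single q 1 - fun j => k q j
  have hzq : z q = 0 := by simp [z, hk q]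
  refine ⟨transvec (Pi.single q 1) z (by simp [hzq]),
    transvec_single_left_mem hpq hA hB hzq fun j hjp hjq => ?_, ?_⟩
  · simpa [z, hjq] using (hkℓ j hjp hjq).neg_right
  have hkq : (k : Matrix n n ℤ) *ᵥ Pi.single q 1 = Pi.single q 1 := by
    ext i
    rw [mulVec_single_one, col_apply, hk i, one_apply, Pi.single_apply]
  rintro i j hij
  simp only [coe_mul, coe_transvec, Matrix.mul_add, Matrix.mul_one, mul_vecMulVec, hkq,
    Matrix.add_apply, vecMulVec_apply]
  rcases hij with rfl | rfl
  · simp [z, one_apply, Pi.single_apply, @eq_comm _ j]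
  · simp [hzq, hk i]

end Generation

theorem principalCongruenceSubgroup_le_closure {p q : n} (hpq : p ≠ q) (ℓ : ℕ) :
    principalCongruenceSubgroup n ℓ ≤ Subgroup.closure
      ((principalCongruenceSubgroup n ℓ ⊓ fixingRowsCols ℤ {q} : Set (SpecialLinearGroup n ℤ)) ∪
        fixingRowsCols ℤ {p, q}ᶜ) := by
  set H := Subgroup.closure
      ((principalCongruenceSubgroup n ℓ ⊓ fixingRowsCols ℤ {q} : Set (SpecialLinearGroup n ℤ)) ∪
        fixingRowsCols ℤ {p, q}ᶜ)
  have hA : principalCongruenceSubgroup n ℓ ⊓ fixingRowsCols ℤ {q} ≤ H :=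
    fun g hg => Subgroup.subset_closure (.inl hg)
  have hB : fixingRowsCols ℤ {p, q}ᶜ ≤ H := fun g hg => Subgroup.subset_closure (.inr hg)
  set K := (fixingRowsCols (ZMod ℓ) {p, q}ᶜ).comap (map (n := n) (Int.castRingHom (ZMod ℓ)))
  have hΓK : principalCongruenceSubgroup n ℓ ≤ K := fun g hg => by
    simp [K, Subgroup.mem_comap, MonoidHom.mem_ker.mp hg]
  have hHK : H ≤ K := by
    rw [Subgroup.closure_le]
    rintro g (hg | hg)
    · exact hΓK hg.1
    · exact map_mem_fixingRowsCols _ hg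
  intro g hg
  have hgℓ := mem_principalCongruenceSubgroup_iff.mp hg
  obtain ⟨x, hxH, hx⟩ := exists_mem_mulVec_eq_single hpq hA hB (v := ↑g *ᵥ Pi.single q 1)
    ⟨Pi.single q 1 ᵥ* ↑g⁻¹, by
      rw [← dotProduct_mulVec, inv_mulVec_mulVec, single_one_dotProduct, Pi.single_eq_same]⟩
    (fun i _ hiq => by simpa [mulVec_single_one, one_apply_ne hiq] using hgℓ i q)
    (by simpa [mulVec_single_one] using hgℓ q q)
  have hk : ∀ i, (x * g) i q = (1 : Matrix n n ℤ) i q := fun i => by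
    have := congrFun hx i
    rwa [mulVec_mulVec, mulVec_single_one, col_apply, Pi.single_apply, ← one_apply] at this
  have hkK : x * g ∈ K := K.mul_mem (hHK hxH) (hΓK hg)
  have hkℓ : ∀ j, j ≠ p → j ≠ q → (ℓ : ℤ) ∣ (x * g) q j := fun j hjp hjq => by
    have := hkK q j (.inr (by simp [hjp, hjq]))
    rwa [map_apply_coe, RingHom.mapMatrix_apply, Matrix.map_apply, one_apply_ne (Ne.symm hjq),
      Int.coe_castRingHom, ZMod.intCast_zmod_eq_zero_iff_dvd] at this
  obtain ⟨y, hyH, hky⟩ := exists_mul_mem_fixingRowsCols hpq hA hB hk hkℓ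
  have hkyΓ : x * g * y ∈ principalCongruenceSubgroup n ℓ :=
    mem_principalCongruenceSubgroup_of_mem_fixingRowsCols hky (K.mul_mem hkK (hHK hyH))
  have hg_eq : g = x⁻¹ * (x * g * y) * y⁻¹ := by group
  rw [hg_eq]
  exact H.mul_mem (H.mul_mem (H.inv_mem hxH) (hA ⟨hkyΓ, hky⟩)) (H.inv_mem hyH)

end Matrix.SpecialLinearGroup

theorem congruenceSubgroup_le_closure_topLeft_union_bottomSL2_general (m ℓ : ℕ) :
    (Matrix.SpecialLinearGroup.map (n := Fin (m + 4))
        (Int.castRingHom (ZMod ℓ))).ker ≤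
      Subgroup.closure
        ({g : Matrix.SpecialLinearGroup (Fin (m + 4)) ℤ |
            g ∈ (Matrix.SpecialLinearGroup.map (n := Fin (m + 4))
              (Int.castRingHom (ZMod ℓ))).ker ∧
            ∀ i j : Fin (m + 4), ((i : ℕ) = m + 3 ∨ (j : ℕ) = m + 3) →
              g.val i j = (1 : Matrix (Fin (m + 4)) (Fin (m + 4)) ℤ) i j} ∪
         {g : Matrix.SpecialLinearGroup (Fin (m + 4)) ℤ |
            ∀ i j : Fin (m + 4), ((i : ℕ) < m + 2 ∨ (j : ℕ) < m + 2) →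
              g.val i j = (1 : Matrix (Fin (m + 4)) (Fin (m + 4)) ℤ) i j}) := by
  have hq : ({Fin.last (m + 3)} : Set (Fin (m + 4))) = {i : Fin (m + 4) | (i : ℕ) = m + 3} := by
    ext i
    simp [Fin.ext_iff]
  have hpq : ({(Fin.last (m + 2)).castSucc, Fin.last (m + 3)}ᶜ : Set (Fin (m + 4))) =
      {i : Fin (m + 4) | (i : ℕ) < m + 2} := by
    ext i
    simp [Fin.ext_iff]
    omega
  have h := Matrix.SpecialLinearGroup.principalCongruenceSubgroup_le_closure
    (Fin.castSucc_lt_last (Fin.last (m + 2))).ne ℓ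
  rw [hpq, hq] at h
  exact h

/-- For `n ≥ 3` and `ℓ ≥ 1`, the congruence subgroup `Γ_{n+1}(ℓ) ⊆ SL_{n+1}(ℤ)` is
contained in the subgroup generated by `Γ_n(ℓ)` (embedded in the top-left `n × n`
block, acting as the identity on the last coordinate) together with the copy of
`SL_2(ℤ)` embedded in the bottom-right `2 × 2` block.  Here `n = m + 3`. -/
theorem congruenceSubgroup_le_closure_topLeft_union_bottomSL2 (m ℓ : ℕ) (hℓ : 1 ≤ ℓ) :
    (Matrix.SpecialLinearGroup.map (n := Fin (m + 4))
        (Int.castRingHom (ZMod ℓ))).ker ≤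
      Subgroup.closure
        ({g : Matrix.SpecialLinearGroup (Fin (m + 4)) ℤ |
            g ∈ (Matrix.SpecialLinearGroup.map (n := Fin (m + 4))
              (Int.castRingHom (ZMod ℓ))).ker ∧
            ∀ i j : Fin (m + 4), ((i : ℕ) = m + 3 ∨ (j : ℕ) = m + 3) →
              g.val i j = (1 : Matrix (Fin (m + 4)) (Fin (m + 4)) ℤ) i j} ∪
         {g : Matrix.SpecialLinearGroup (Fin (m + 4)) ℤ |
            ∀ i j : Fin (m + 4), ((i : ℕ) < m + 2 ∨ (j : ℕ) < m + 2) →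
              g.val i j = (1 : Matrix (Fin (m + 4)) (Fin (m + 4)) ℤ) i j}) :=
  congruenceSubgroup_le_closure_topLeft_union_bottomSL2_general m ℓ
end
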